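/- Let G be a finite simple graph such that every induced subgraph G' of G satisfies χ(G') = χ_DP(G') (where χ denotes the ordinary chromatic number). Then G is partially DP-nice, i.e., α_t^{DP}(G) ≥ t·|V(G)|/χ_DP(G) for every integer t with 1 ≤ t ≤ χ_DP(G). -/

import Mathlib

open SimpleGraph

/-- `DPCover G H L` means `(L, H)` is a cover of the graph `G`:
(1) the sets `L u` partition `V(H)`; (2) each `H[L u]` is complete;
(3) for each edge `uv` of `G`, the edges of `H` between `L u` and `L v` form a matching;
(4) there are no edges of `H` between lists of distinct non-adjacent vertices. -/
structure DPCover {V : Type} (G : SimpleGraph V) {W : Type} (H : SimpleGraph W)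
    (L : V → Finset W) : Prop where
  partition : ∀ w : W, ∃! v : V, w ∈ L v
  cliques : ∀ v : V, ∀ a ∈ L v, ∀ b ∈ L v, a ≠ b → H.Adj a b
  matching : ∀ ⦃u v : V⦄, G.Adj u v → ∀ a ∈ L u, ∀ b ∈ L v, ∀ b' ∈ L v,
      H.Adj a b → H.Adj a b' → b = b'
  nonadj : ∀ ⦃u v : V⦄, u ≠ v → ¬ G.Adj u v → ∀ a ∈ L u, ∀ b ∈ L v, ¬ H.Adj a b

/-- A finset is independent in `H` if no two of its elements are adjacent. -/
def IsIndepFinset {W : Type} (H : SimpleGraph W) (S : Finset W) : Prop :=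
  ∀ a ∈ S, ∀ b ∈ S, ¬ H.Adj a b

/-- The independence number of `H`. -/
noncomputable def indepNum {W : Type} [Fintype W] (H : SimpleGraph W) : ℕ :=
  sSup {n : ℕ | ∃ S : Finset W, IsIndepFinset H S ∧ S.card = n}

/-- The DP-chromatic number of `G`: the least `m` such that every `m`-fold cover `(L, H)`
of `G` admits an `H`-coloring, i.e. an independent set in `H` of size `|V(G)|`. -/
noncomputable def chiDP {V : Type} [Fintype V] (G : SimpleGraph V) : ℕ :=
  sInf {m : ℕ | ∀ (W : Type) (_ : Fintype W) (H : SimpleGraph W) (L : V → Finset W),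
    DPCover G H L → (∀ v, (L v).card = m) →
    ∃ S : Finset W, IsIndepFinset H S ∧ S.card = Fintype.card V}

/-- The partial DP `t`-chromatic number of `G`: the minimum of the independence number
`α(H)` over all `t`-fold covers `(L, H)` of `G`. -/
noncomputable def alphaDP {V : Type} [Fintype V] (G : SimpleGraph V) (t : ℕ) : ℕ :=
  sInf {n : ℕ | ∃ (W : Type) (_ : Fintype W) (H : SimpleGraph W) (L : V → Finset W),
    DPCover G H L ∧ (∀ v, (L v).card = t) ∧ _root_.indepNum H = n}

/-- A graph `G` is partially DP-nice if `α_t^{DP}(G) ≥ t|V(G)|/χ_DP(G)` for all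
`t ∈ {1, …, χ_DP(G)}`. -/
def PartiallyDPNice {V : Type} [Fintype V] (G : SimpleGraph V) : Prop :=
  ∀ t : ℕ, 1 ≤ t → t ≤ chiDP G →
    (t * Fintype.card V : ℚ) / (chiDP G : ℚ) ≤ (alphaDP G t : ℚ)

/-- The chromatic number of a graph: the least `n` such that `G` is `n`-colorable. -/
noncomputable def chromNum {V : Type} (G : SimpleGraph V) : ℕ :=
  sInf {n : ℕ | G.Colorable n}

/-!
Let `k = χ_DP(G) ≥ t ≥ 1`. Every `k`-fold DP-colorable graph is `k`-colorable (use the cover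
`G □ K_k`, whose colorings are exactly proper `k`-colorings), so the `t` largest classes of a
`k`-coloring span a set `S` with `|S| ≥ t|V|/k` and `χ(G[S]) ≤ t`. By hypothesis
`χ_DP(G[S]) = χ(G[S]) ≤ t`, so any `t`-fold cover of `G`, restricted to `S` and with its lists
shrunk, has an `H`-coloring of `G[S]`: an independent set of size `|S|`.
-/

open Finset

theorem Finset.mem_singleton_product_univ {α β : Type*} [Fintype β] {a : α} {w : α × β} :
    w ∈ ({a} : Finset α) ×ˢ (univ : Finset β) ↔ w.1 = a := by
  simp only [mem_product, mem_singleton, mem_univ, and_true]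

theorem Finset.exists_subset_card_eq_mul_sum_le {ι : Type*} [DecidableEq ι] (a : ι → ℕ)
    {t : ℕ} (K : Finset ι) (ht : t ≤ #K) :
    ∃ T ⊆ K, #T = t ∧ t * ∑ i ∈ K, a i ≤ #K * ∑ i ∈ T, a i := by
  induction K using Finset.strongInduction with
  | H K ih =>
  rcases ht.eq_or_lt with rfl | hlt
  · exact ⟨K, subset_rfl, rfl, le_rfl⟩
  rcases Nat.eq_zero_or_pos t with rfl | ht0
  · exact ⟨∅, empty_subset K, card_empty, by simp⟩
  -- drop an element of minimal weight and recurse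
  obtain ⟨j, hjK, hjmin⟩ := K.exists_min_image a (card_pos.mp (by omega))
  have hcard : #(K.erase j) + 1 = #K := card_erase_add_one hjK
  obtain ⟨T, hTK, hTcard, hT⟩ := ih _ (erase_ssubset hjK) (by omega)
  refine ⟨T, hTK.trans (erase_subset j K), hTcard, ?_⟩
  have hmin : #K * a j ≤ ∑ i ∈ K, a i := by simpa using K.card_nsmul_le_sum a (a j) hjmin
  rw [← sum_erase_add K a hjK, ← hcard] at hmin ⊢
  refine Nat.le_of_mul_le_mul_left ?_ (show 0 < #(K.erase j) by omega)
  nlinarith [Nat.mul_le_mul_left t hmin]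

namespace SimpleGraph

variable {V : Type} {G : SimpleGraph V}

theorem Coloring.colorable_induce_of_mapsTo {α : Type*} (c : G.Coloring α) {S : Set V}
    {T : Finset α} (hST : ∀ v ∈ S, c v ∈ T) : (G.induce S).Colorable #T := by
  simpa using (Coloring.mk (fun v : S => (⟨c v, hST v v.2⟩ : T))
    fun huv he => c.valid huv (congrArg Subtype.val he)).colorable

/-- The `t` largest color classes of a `k`-coloring cover at least a `t / k` fraction of `V`. -/
theorem Colorable.exists_colorable_induce_mul_card_le [Fintype V] {k t : ℕ}
    (hG : G.Colorable k) (htk : t ≤ k) :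
    ∃ S : Finset V, (G.induce (S : Set V)).Colorable t ∧ t * Fintype.card V ≤ k * #S := by
  classical
  obtain ⟨c⟩ := hG
  obtain ⟨T, -, hTcard, hT⟩ := exists_subset_card_eq_mul_sum_le
    (fun i => #{v | c v = i}) (univ : Finset (Fin k)) (by simpa using htk)
  refine ⟨({v | c v ∈ T} : Finset V), hTcard ▸ c.colorable_induce_of_mapsTo (by simp), ?_⟩
  rw [card_eq_sum_card_fiberwise (s := {v | c v ∈ T}) (t := T) (f := c) (by simp [Set.MapsTo]),
    ← card_univ, card_eq_sum_card_fiberwise (t := univ) (f := c) (by simp)]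
  have hclass : ∀ i ∈ T,
      #(filter (fun v => c v ∈ T ∧ c v = i) univ) = #(filter (c · = i) univ) :=
    fun i hi => congrArg card (filter_congr fun v _ => ⟨And.right, fun h => ⟨h ▸ hi, h⟩⟩)
  simp only [filter_filter, sum_congr rfl hclass]
  simpa using hT

end SimpleGraph

section DPColoring

variable {V : Type} {G : SimpleGraph V}

-- `chiDP G` is definitionally `sInf {m | DPColorable G m}`.
variable (G) in
def DPColorable [Fintype V] (m : ℕ) : Prop :=
  ∀ (W : Type) (_ : Fintype W) (H : SimpleGraph W) (L : V → Finset W),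
    DPCover G H L → (∀ v, (L v).card = m) →
    ∃ S : Finset W, IsIndepFinset H S ∧ S.card = Fintype.card V

variable (G) in
theorem DPColorable.of_isEmpty [Fintype V] [IsEmpty V] (m : ℕ) :
    DPColorable G m :=
  fun _ _ _ _ _ _ => ⟨∅, by simp [IsIndepFinset], by simp⟩

theorem dpColorable_chiDP_of_pos [Fintype V] (h : 0 < chiDP G) : DPColorable G (chiDP G) :=
  Nat.sInf_mem (Nat.nonempty_of_pos_sInf h)

theorem dpColorable_chiDP_of_chromNum_eq [Fintype V] (h : chromNum G = chiDP G) :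
    DPColorable G (chiDP G) := by
  rcases (chiDP G).eq_zero_or_pos with h0 | hpos
  -- `chiDP G = 0` may be the junk value of an empty infimum, but then `χ(G) = 0` forces `V = ∅`.
  · have hcol : G.Colorable (chromNum G) :=
      Nat.sInf_mem (s := {n | G.Colorable n}) ⟨_, G.colorable_of_fintype⟩
    have := (h0 ▸ h ▸ hcol : G.Colorable 0).isEmpty
    exact h0 ▸ DPColorable.of_isEmpty G 0
  · exact dpColorable_chiDP_of_pos hpos

theorem chiDP_le_of_chromNum_eq [Fintype V] {t : ℕ} (h : chromNum G = chiDP G)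
    (hG : G.Colorable t) : chiDP G ≤ t :=
  h ▸ Nat.sInf_le hG

variable (G) in
theorem dpCover_boxProd_top (β : Type) [Fintype β] :
    DPCover G (G □ (⊤ : SimpleGraph β)) (fun v => {v} ×ˢ univ) where
  partition w :=
    ⟨w.1, mem_singleton_product_univ.mpr rfl,
      fun _ hv => (mem_singleton_product_univ.mp hv).symm⟩
  cliques v a ha b hb hab := by
    rw [mem_singleton_product_univ] at ha hb
    have hfst : a.1 = b.1 := ha.trans hb.symm
    exact Or.inr ⟨fun hsnd => hab (Prod.ext hfst hsnd), hfst⟩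
  matching u v huv a ha b hb b' hb' h1 h2 := by
    rw [mem_singleton_product_univ] at ha hb hb'
    have hsnd {c : V × β} (hc : c.1 = v) (hac : (G □ ⊤).Adj a c) : a.2 = c.2 :=
      hac.elim And.right fun h => absurd (ha ▸ hc ▸ h.2) huv.ne
    exact Prod.ext (hb.trans hb'.symm) ((hsnd hb h1).symm.trans (hsnd hb' h2))
  nonadj u v huv hnadj a ha b hb hab := by
    rw [mem_singleton_product_univ] at ha hb
    rcases hab with h | h
    · exact hnadj (ha ▸ hb ▸ h.1)
    · exact huv (ha ▸ hb ▸ h.2)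

/-- An independent set of `G □ ⊤` meeting every fibre is the graph of a proper coloring. -/
theorem colorable_of_isIndepFinset_boxProd_top [Fintype V] {β : Type} [Fintype β]
    {X : Finset (V × β)} (hX : IsIndepFinset (G □ ⊤) X) (hcard : #X = Fintype.card V) :
    G.Colorable (Fintype.card β) := by
  have hinj : Function.Injective fun w : X => w.1.1 := fun a b hab => by
    by_contra hne
    exact hX a a.2 b b.2 (Or.inr ⟨fun hsnd => hne (Subtype.ext (Prod.ext hab hsnd)), hab⟩)
  let e := Equiv.ofBijective _ ((Fintype.bijective_iff_injective_and_card _).mpr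
    ⟨hinj, by simpa using hcard⟩)
  have he (v : V) : (e.symm v).1.1 = v := e.apply_symm_apply v
  refine (Coloring.mk (fun v => (e.symm v).1.2) fun {u v} huv hc => ?_).colorable
  exact hX _ (e.symm u).2 _ (e.symm v).2 (Or.inl ⟨(he u).symm ▸ (he v).symm ▸ huv, hc⟩)

theorem DPColorable.colorable [Fintype V] {m : ℕ} (h : DPColorable G m) : G.Colorable m := by
  obtain ⟨X, hX, hXcard⟩ :=
    h (V × Fin m) inferInstance _ _ (dpCover_boxProd_top G (Fin m)) (by simp)
  simpa using colorable_of_isIndepFinset_boxProd_top hX hXcard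

namespace DPCover

variable {W : Type} {H : SimpleGraph W} {L : V → Finset W}

theorem restrict [DecidableEq W] (hL : DPCover G H L) {S : Set V} {B : Finset W}
    (hB : ∀ w ∈ B, ∃ v ∈ S, w ∈ L v) :
    DPCover (G.induce S) (H.comap ((↑) : B → W)) (fun v => (L v).subtype (· ∈ B)) where
  partition w := by
    obtain ⟨v, hvS, hwv⟩ := hB w w.2
    refine ⟨⟨v, hvS⟩, mem_subtype.mpr hwv, fun u hu => Subtype.ext ?_⟩
    exact (hL.partition w).unique (mem_subtype.mp hu) hwv
  cliques v a ha b hb hab :=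
    hL.cliques v a (mem_subtype.mp ha) b (mem_subtype.mp hb) (Subtype.coe_ne_coe.mpr hab)
  matching u v huv a ha b hb b' hb' h1 h2 := Subtype.ext <|
    hL.matching huv a (mem_subtype.mp ha) b (mem_subtype.mp hb) b' (mem_subtype.mp hb') h1 h2
  nonadj u v huv hnadj a ha b hb :=
    hL.nonadj (Subtype.coe_ne_coe.mpr huv) hnadj a (mem_subtype.mp ha) b (mem_subtype.mp hb)

/-- Restricting to `S` and shrinking the lists to size `m` yields an `m`-fold cover of `G[S]`. -/
theorem exists_isIndepFinset_of_dpColorable_induce (hL : DPCover G H L) {S : Set V}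
    [Fintype S] {m : ℕ} (hS : DPColorable (G.induce S) m) (hm : ∀ v, m ≤ #(L v)) :
    ∃ X : Finset W, IsIndepFinset H X ∧ #X = Fintype.card S := by
  classical
  choose L' hL'L hL'card using fun v : S => exists_subset_card_eq (hm v)
  set B := univ.biUnion L'
  have hB : ∀ w ∈ B, ∃ v ∈ S, w ∈ L v := fun w hw => by
    obtain ⟨v, -, hwv⟩ := mem_biUnion.mp hw
    exact ⟨v, v.2, hL'L v hwv⟩
  have hLB (v : S) : {w ∈ L v | w ∈ B} = L' v := by
    ext w
    refine ⟨fun hw => ?_, fun hw =>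
      mem_filter.mpr ⟨hL'L v hw, mem_biUnion.mpr ⟨v, mem_univ v, hw⟩⟩⟩
    obtain ⟨hwL, hwB⟩ := mem_filter.mp hw
    obtain ⟨u, -, hwu⟩ := mem_biUnion.mp hwB
    obtain rfl : u = v := Subtype.ext ((hL.partition w).unique (hL'L u hwu) hwL)
    exact hwu
  obtain ⟨X, hX, hXcard⟩ := hS B inferInstance _ _ (hL.restrict hB)
    fun v => by rw [card_subtype, hLB, hL'card]
  refine ⟨X.map (Function.Embedding.subtype _), ?_, by simpa using hXcard⟩
  simp only [IsIndepFinset, mem_map, Function.Embedding.coe_subtype]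
  rintro _ ⟨a, ha, rfl⟩ _ ⟨b, hb, rfl⟩
  exact hX a ha b hb

end DPCover

theorem card_le_indepNum {W : Type} [Fintype W] {H : SimpleGraph W} {X : Finset W}
    (hX : IsIndepFinset H X) : #X ≤ _root_.indepNum H :=
  le_csSup ⟨Fintype.card W, by rintro _ ⟨Y, -, rfl⟩; exact card_le_univ Y⟩ ⟨X, hX, rfl⟩

theorem le_alphaDP [Fintype V] {n t : ℕ}
    (h : ∀ (W : Type) [Fintype W] (H : SimpleGraph W) (L : V → Finset W),
      DPCover G H L → (∀ v, #(L v) = t) → ∃ X : Finset W, IsIndepFinset H X ∧ n ≤ #X) :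
    n ≤ alphaDP G t := by
  refine le_csInf
    ⟨_, V × Fin t, inferInstance, _, _, dpCover_boxProd_top G (Fin t), by simp, rfl⟩ ?_
  rintro _ ⟨W, _, H, L, hL, hcard, rfl⟩
  obtain ⟨X, hX, hnX⟩ := h W H L hL hcard
  exact hnX.trans (card_le_indepNum hX)

theorem card_le_alphaDP_of_dpColorable_induce [Fintype V] {S : Set V} [Fintype S] {m t : ℕ}
    (hS : DPColorable (G.induce S) m) (hmt : m ≤ t) : Fintype.card S ≤ alphaDP G t :=
  le_alphaDP fun _ _ _ _ hL hcard =>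
    (hL.exists_isIndepFinset_of_dpColorable_induce hS fun v => hcard v ▸ hmt).imp
      fun _ hX => ⟨hX.1, hX.2.ge⟩

end DPColoring

/-- If every induced subgraph `G'` of `G` satisfies `χ(G') = χ_DP(G')`, then `G` is
partially DP-nice. -/
theorem partiallyDPNice_of_hereditary_chrom_eq_chiDP {V : Type} [Fintype V]
    (G : SimpleGraph V)
    (h : ∀ S : Finset V, chromNum (G.induce (S : Set V)) = chiDP (G.induce (S : Set V))) :
    PartiallyDPNice G := by
  intro t ht htk
  have hk : 0 < chiDP G := Nat.lt_of_lt_of_le ht htk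
  obtain ⟨S, hSt, hS⟩ :=
    (dpColorable_chiDP_of_pos hk).colorable.exists_colorable_induce_mul_card_le htk
  have hα : #S ≤ alphaDP G t := by
    simpa using card_le_alphaDP_of_dpColorable_induce (dpColorable_chiDP_of_chromNum_eq (h S))
      (chiDP_le_of_chromNum_eq (h S) hSt)
  rw [div_le_iff₀ (by exact_mod_cast hk)]
  exact_mod_cast hS.trans (by rw [mul_comm]; gcongr)
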